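/- Let x be a rational point of the Cantor space lying in the tail equivalence class of a prime word m_x, and let φ be a homeomorphism of the Cantor space normalizing V, so that φ(x) is in the tail class of a prime word m_{φ(x)}. Then for every v ∈ V with v(x) = x and v'(x) ≠ 1, one has log₂((φvφ^{-1})'(φ(x)))/|m_{φ(x)}| = log₂(v'(x))/|m_x|, and log₂(v'(x)) is an integer multiple of |m_x|. -/

import Mathlib

/-! Basic setup: the Cantor space, prefix replacement, Thompson's group `V`,
slopes, dyadic rationals, standard dyadic partitions, locally constant maps,
and the permutation model of the twisted fraction groups `LΓ ⋊ V`. -/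

abbrev Cantor : Type := ℕ → Bool

/-- Concatenation of a finite word with an infinite sequence. -/
def cat (w : List Bool) (x : Cantor) : Cantor :=
  fun n => if n < w.length then w.getD n false else x (n - w.length)

/-- The standard dyadic interval (cylinder) associated to a finite word. -/
def cyl (w : List Bool) : Set Cantor := {x | ∃ y : Cantor, x = cat w y}

/-- Membership in Thompson's group `V`: a homeomorphism of the Cantor space which is
everywhere locally given by prefix replacement. -/
def memV (v : Cantor ≃ₜ Cantor) : Prop :=
  ∀ x : Cantor, ∃ (m w : List Bool) (y : Cantor),
    x = cat m y ∧ ∀ z : Cantor, v (cat m z) = cat w z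

/-- `HasLogSlope v x k` : `k = log₂ v'(x)`, base-2 logarithm of the slope of `v` at `x`. -/
def HasLogSlope (v : Cantor ≃ₜ Cantor) (x : Cantor) (k : ℤ) : Prop :=
  ∃ (m w : List Bool) (y : Cantor),
    x = cat m y ∧ (∀ z : Cantor, v (cat m z) = cat w z) ∧
      k = (m.length : ℤ) - (w.length : ℤ)

open Classical in
noncomputable def logSlope (v : Cantor ≃ₜ Cantor) (x : Cantor) : ℤ :=
  if h : ∃ k : ℤ, HasLogSlope v x k then h.choose else 0

/-- The eventually periodic sequence `c∞ = c·c·c⋯`. -/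
def tailSeq (c : List Bool) : Cantor := fun n => c.getD (n % c.length) false

/-- `x` lies in the tail equivalence class of the word `c`, i.e. `x = y·c∞`. -/
def InTailClass (x : Cantor) (c : List Bool) : Prop :=
  ∃ y : List Bool, x = cat y (tailSeq c)

/-- `x` is eventually periodic (a rational point of the Cantor space). -/
def EvPeriodic (x : Cantor) : Prop :=
  ∃ (y c : List Bool), c ≠ [] ∧ x = cat y (tailSeq c)

/-- A prime word: a nonempty word which is not a proper power of a word. -/
def PrimeWord (c : List Bool) : Prop :=
  c ≠ [] ∧ ∀ (d : List Bool) (k : ℕ), 2 ≤ k → c ≠ (List.replicate k d).flatten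

/-- `conjH φ v = φ ∘ v ∘ φ⁻¹`. -/
def conjH (φ v : Cantor ≃ₜ Cantor) : Cantor ≃ₜ Cantor := φ.symm.trans (v.trans φ)

/-- `φ` normalizes Thompson's group `V` inside `Homeo(𝔠)` : `φ V φ⁻¹ = V`. -/
def NormalizesV (φ : Cantor ≃ₜ Cantor) : Prop :=
  (conjH φ) '' {v | memV v} = {v | memV v}

/-- The copy of the dyadic rationals `Q₂ ⊂ 𝔠` : finitely supported sequences. -/
def InQ2 (x : Cantor) : Prop := ∃ n : ℕ, ∀ m, n ≤ m → x m = false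

def zeroSeq : Cantor := fun _ => false

/-- A standard dyadic partition of the Cantor space. -/
def IsSDP (P : Finset (List Bool)) : Prop :=
  ∀ x : Cantor, ∃! w : List Bool, w ∈ P ∧ x ∈ cyl w

/-- Locally constant map: constant on each piece of some standard dyadic partition. -/
def IsLC {Γ : Type*} (f : Cantor → Γ) : Prop :=
  ∃ P : Finset (List Bool), IsSDP P ∧ ∀ w ∈ P, ∀ y z : Cantor, f (cat w y) = f (cat w z)

/-- `h` agrees on `Q₂` with (the restriction of) a locally constant map. -/
def AgreesOnQ2WithLC {Γ : Type*} (h : Cantor → Γ) : Prop :=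
  ∃ b : Cantor → Γ, IsLC b ∧ ∀ x, InQ2 x → h x = b x

section GroupPart
variable {Γ : Type*} [Group Γ]

/-- `alphaWord α₀ α₁ (m₁⋯m_k) = α_{m_k} ∘ ⋯ ∘ α_{m₁}`. -/
def alphaWord (α₀ α₁ : Γ ≃* Γ) (m : List Bool) : Γ ≃* Γ :=
  m.foldl (fun acc b => acc.trans (if b then α₁ else α₀)) (MulEquiv.refl Γ)

open Classical in
/-- The twisting automorphism `τ_{v,x} = α_{v(I)}⁻¹ ∘ α_I` for a standard dyadic
interval `I` containing `x` and adapted to `v`. -/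
noncomputable def tauEquiv (α₀ α₁ : Γ ≃* Γ) (v : Cantor ≃ₜ Cantor) (x : Cantor) : Γ ≃* Γ :=
  if h : ∃ p : List Bool × List Bool, x ∈ cyl p.1 ∧ ∀ z : Cantor, v (cat p.1 z) = cat p.2 z
  then (alphaWord α₀ α₁ h.choose.1).trans (alphaWord α₀ α₁ h.choose.2).symm
  else MulEquiv.refl Γ

/-- The element `a·v` of the twisted `LΓ ⋊ V`, realized as the permutation
`(x,g) ↦ (v x, a(v x) · τ_{v,x}(g))` of `𝔠 × Γ`. -/
noncomputable def permOf (α₀ α₁ : Γ ≃* Γ) (a : Cantor → Γ) (v : Cantor ≃ₜ Cantor) :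
    Equiv.Perm (Cantor × Γ) where
  toFun p := (v p.1, a (v p.1) * tauEquiv α₀ α₁ v p.1 p.2)
  invFun p := (v.symm p.1, (tauEquiv α₀ α₁ v (v.symm p.1)).symm ((a p.1)⁻¹ * p.2))
  left_inv := by rintro ⟨x, g⟩; simp
  right_inv := by rintro ⟨x, g⟩; simp

end GroupPart

/-- The twisted fraction group `G = LΓ ⋊ V` of the triple `(Γ, α₀, α₁)`,
as a group of permutations of `𝔠 × Γ`. -/
noncomputable def Gsub (Γ : Type*) [Group Γ] (α₀ α₁ : Γ ≃* Γ) :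
    Subgroup (Equiv.Perm (Cantor × Γ)) :=
  Subgroup.closure {p | ∃ a v, IsLC a ∧ memV v ∧ p = permOf α₀ α₁ a v}

/-- The untwisted case `α₀ = α₁ = id`. -/
noncomputable def permOfU {Γ : Type*} [Group Γ] (a : Cantor → Γ) (v : Cantor ≃ₜ Cantor) :=
  permOf (MulEquiv.refl Γ) (MulEquiv.refl Γ) a v

/-- The untwisted fraction group `G = LΓ ⋊ V`. -/
noncomputable def GsubU (Γ : Type*) [Group Γ] := Gsub Γ (MulEquiv.refl Γ) (MulEquiv.refl Γ)

/-- `f ∈ N_{K̄}(G)` : the element `f` of `K̄ = ∏_{Q₂}Γ` normalizes `G = LΓ ⋊ V`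
(untwisted case), i.e. `f·a·(f^v)⁻¹` and `f⁻¹·a·f^v` are locally constant on `Q₂`. -/
def InNormKbar {Γ : Type*} [Group Γ] (f : Cantor → Γ) : Prop :=
  ∀ (a : Cantor → Γ) (v : Cantor ≃ₜ Cantor), IsLC a → memV v →
    AgreesOnQ2WithLC (fun x => f x * a x * (f (v.symm x))⁻¹) ∧
    AgreesOnQ2WithLC (fun x => (f x)⁻¹ * a x * f (v.symm x))


/-! Near a fixed point `x` of `v ∈ V` with log-slope `k < 0`, `v` is a prefix rule
`m·z ↦ m·s·z` with `|s| = -k`; its fixed point forces `x = m·s^∞`, so the tail of `x` has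
period `|s|` and, the minimal period of `c^∞` being `|c|` for a prime word `c`, `|c|` divides `k`
(apply this to `v⁻¹` when `k > 0`). Swapping cylinders gives a generator `σ ∈ V` fixing `x` with
log-slope exactly `|m_x|`, so `v` agrees with `σ^a` near `x`, where `k = a|m_x|`. Germs at `x`
are carried by `φ` to germs at `φ x`, hence `k' = a q` with `q` the log-slope of `φσφ⁻¹`.
Finally `q = b|m_{φx}|`, pulling the generator at `φ x` back by `φ⁻¹` shows that `b` is a unit,
and `b = 1` because `φ` maps attracting fixed points (negative slope) to attracting ones. -/

open Filter Topology Function PiNat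

namespace Cantor

/- `Stream'` is not reducible, so its lemmas do not rewrite terms of type `Cantor`: they are
transported through these wrappers and `cat_eq_appendStream`. -/
def take (n : ℕ) (x : Cantor) : List Bool := Stream'.take n x

def drop (n : ℕ) (x : Cantor) : Cantor := Stream'.drop n x

variable {a b m m' s w : List Bool} {x y y' z : Cantor} {n : ℕ}

lemma cat_eq_appendStream (w : List Bool) (z : Cantor) : cat w z = w ++ₛ z := by
  funext n
  rcases lt_or_ge n w.length with h | h
  · rw [cat, if_pos h, List.getD_eq_getElem _ _ h]
    exact (Stream'.get_append_left _ _ _ h).symm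
  · obtain ⟨k, rfl⟩ := Nat.exists_eq_add_of_le h
    rw [cat, if_neg (by omega), Nat.add_sub_cancel_left]
    exact (Stream'.get_append_right _ _ _).symm

@[simp] lemma cat_nil (z : Cantor) : cat [] z = z :=
  cat_eq_appendStream [] z

lemma cat_append (a b : List Bool) (z : Cantor) : cat (a ++ b) z = cat a (cat b z) := by
  rw [cat_eq_appendStream, cat_eq_appendStream a, cat_eq_appendStream b]
  exact Stream'.append_append_stream a b z

lemma cat_injective (w : List Bool) : Injective (cat w) := fun y z h =>
  Stream'.append_right_injective w y z
    ((cat_eq_appendStream w y).symm.trans (h.trans (cat_eq_appendStream w z)))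

@[simp] lemma drop_cat (w : List Bool) (z : Cantor) : drop w.length (cat w z) = z :=
  (congrArg (Stream'.drop w.length) (cat_eq_appendStream w z)).trans
    (Stream'.drop_append_stream w z)

lemma take_cat_of_le (h : m.length ≤ n) : take n (cat m y) = m ++ take (n - m.length) y := by
  have := Stream'.append_take (n - m.length) m y
  rw [Nat.add_sub_cancel' h] at this
  exact (congrArg (Stream'.take n) (cat_eq_appendStream m y)).trans this.symm

@[simp] lemma take_cat (w : List Bool) (z : Cantor) : take w.length (cat w z) = w := by
  rw [take_cat_of_le le_rfl, Nat.sub_self]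
  exact List.append_nil w

lemma cat_take_drop (n : ℕ) (x : Cantor) : cat (take n x) (drop n x) = x :=
  (cat_eq_appendStream _ _).trans (Stream'.append_take_drop n x)

lemma exists_eq_append_of_cat_eq (h : cat m y = cat m' y') (hle : m.length ≤ m'.length) :
    ∃ e, m' = m ++ e ∧ y = cat e y' := by
  set n := m'.length - m.length
  have hm' : m' = m ++ take n y := by rw [← take_cat_of_le hle, h, take_cat]
  refine ⟨take n y, hm', ?_⟩
  have hy := cat_take_drop n y
  conv_lhs => rw [← hy]
  congr 1
  apply cat_injective m'
  rw [← h, hm', cat_append, hy]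

lemma length_eq_of_forall_cat_eq (h : ∀ z, cat a z = cat b z) : a.length = b.length := by
  wlog hab : a.length < b.length generalizing a b
  · rcases (not_lt.1 hab).lt_or_eq with hlt | heq
    · exact (this (fun z => (h z).symm) hlt).symm
    · exact heq.symm
  have key := fun c => congrFun (h (fun _ => c)) a.length
  simp only [cat, lt_irrefl, if_false, if_pos hab] at key
  exact Bool.noConfusion ((key true).trans (key false).symm)

@[simp] lemma length_take (n : ℕ) (x : Cantor) : (take n x).length = n :=
  Stream'.length_take n x

lemma take_eq_of_mem_cylinder (h : z ∈ cylinder x n) : take n z = take n x :=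
  List.ext_getElem (by simp) fun i hz hx => (Stream'.take_get _ _ _ hz).trans
    ((h i (by simpa using hz)).trans (Stream'.take_get _ _ _ hx).symm)

lemma mem_cyl_iff_take : z ∈ cyl w ↔ take w.length z = w := by
  refine ⟨fun ⟨y, hy⟩ => hy ▸ take_cat w y, fun h => ⟨drop w.length z, ?_⟩⟩
  conv_lhs => rw [← cat_take_drop w.length z, h]

lemma cylinder_mem_nhds (x : Cantor) (n : ℕ) : cylinder x n ∈ 𝓝 x :=
  (isOpen_cylinder _ x n).mem_nhds (self_mem_cylinder x n)

lemma cyl_mem_nhds (hx : x ∈ cyl w) : cyl w ∈ 𝓝 x := by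
  refine mem_of_superset (cylinder_mem_nhds x w.length) fun z hz => ?_
  rw [mem_cyl_iff_take] at hx ⊢
  rw [take_eq_of_mem_cylinder hz, hx]

lemma nhds_hasBasis_cylinder (x : Cantor) : (𝓝 x).HasBasis (fun _ => True) (cylinder x) := by
  refine ⟨fun U => ⟨fun hU => ?_, fun ⟨n, _, hn⟩ => mem_of_superset (cylinder_mem_nhds x n) hn⟩⟩
  obtain ⟨_, ⟨y, n, rfl⟩, hx, hU⟩ := (isTopologicalBasis_cylinders _).mem_nhds_iff.1 hU
  exact ⟨n, trivial, (mem_cylinder_iff_eq.1 hx) ▸ hU⟩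

lemma cat_mem_cylinder_cat (w : List Bool) (h : y ∈ cylinder y' n) :
    cat w y ∈ cylinder (cat w y') (w.length + n) := fun i hi => by
  by_cases hw : i < w.length
  · simp [cat, hw]
  · simp only [cat, hw, if_false]
    exact h _ (by omega)

lemma cat_take_mem_cylinder (n : ℕ) (x z : Cantor) : cat (take n x) z ∈ cylinder x n := by
  simpa [cat_take_drop] using
    cat_mem_cylinder_cat (take n x) (y' := drop n x) (n := 0) (by simp [cylinder_zero])

lemma iterate_cat_mem_cylinder (hs : s ≠ []) (n : ℕ) (y y' : Cantor) :
    (cat s)^[n] y ∈ cylinder ((cat s)^[n] y') n := by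
  induction n with
  | zero => simp [cylinder_zero]
  | succ n ih =>
    rw [iterate_succ_apply', iterate_succ_apply']
    exact cylinder_anti _ (by have := List.length_pos_iff.2 hs; omega) (cat_mem_cylinder_cat s ih)

lemma continuous_cat (w : List Bool) : Continuous (cat w) := continuous_pi fun i => by
  by_cases h : i < w.length
  · simp only [cat, h, if_true]
    exact continuous_const
  · simp only [cat, h, if_false]
    exact continuous_apply _

lemma continuous_drop (n : ℕ) : Continuous (drop n) :=
  continuous_pi fun i => continuous_apply (i + n)

def shift : Cantor → Cantor := drop 1

lemma drop_drop (n m : ℕ) (x : Cantor) : drop n (drop m x) = drop (m + n) x :=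
  Stream'.drop_drop n m x

lemma iterate_shift (n : ℕ) : shift^[n] = drop n := by
  induction n with
  | zero => rfl
  | succ n ih => funext x; rw [iterate_succ_apply', ih, shift, drop_drop]

lemma isPeriodicPt_shift_iff {p : ℕ} {x : Cantor} : IsPeriodicPt shift p x ↔ drop p x = x := by
  rw [IsPeriodicPt, IsFixedPt, iterate_shift]

end Cantor

open Cantor

namespace Homeomorph

variable {X : Type*} [TopologicalSpace X] {v : X ≃ₜ X} {x : X}

lemma inv_apply_eq_self (hfix : v x = x) : v⁻¹ x = x :=
  v.symm_apply_eq.2 hfix.symm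

lemma zpow_apply_eq_self (hfix : v x = x) (n : ℤ) : (v ^ n) x = x := by
  induction n using Int.induction_on with
  | zero => rfl
  | succ n ih => rw [zpow_add_one, mul_apply, hfix, ih]
  | pred n ih => rw [zpow_sub_one, mul_apply, inv_apply_eq_self hfix, ih]

end Homeomorph

namespace HasLogSlope

variable {u v : Cantor ≃ₜ Cantor} {x : Cantor} {k j : ℤ}

lemma unique (h : HasLogSlope v x k) (h' : HasLogSlope v x j) : k = j := by
  obtain ⟨m, w, y, hx, hr, rfl⟩ := h
  obtain ⟨m', w', y', hx', hr', rfl⟩ := h'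
  wlog hle : m.length ≤ m'.length generalizing m w y m' w' y'
  · exact (this m' w' y' hx' hr' m w y hx hr (le_of_not_ge hle)).symm
  obtain ⟨e, rfl, -⟩ := exists_eq_append_of_cat_eq (hx.symm.trans hx') hle
  have hlen : w'.length = (w ++ e).length :=
    length_eq_of_forall_cat_eq fun z => by rw [← hr', cat_append, hr, cat_append]
  simp only [List.length_append] at hlen ⊢
  omega

lemma one (x : Cantor) : HasLogSlope 1 x 0 :=
  ⟨[], [], x, (cat_nil x).symm, fun _ => rfl, rfl⟩

lemma mul (hu : HasLogSlope u x k) (hv : HasLogSlope v (u x) j) :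
    HasLogSlope (v * u) x (k + j) := by
  obtain ⟨m, w, y, rfl, hr, rfl⟩ := hu
  obtain ⟨m', w', y', hx', hr', rfl⟩ := hv
  rw [hr] at hx'
  rcases le_total m'.length w.length with hle | hle
  · obtain ⟨e, rfl, rfl⟩ := exists_eq_append_of_cat_eq hx'.symm hle
    refine ⟨m, w' ++ e, y, rfl, fun z => ?_, by simp; ring⟩
    rw [Homeomorph.mul_apply, hr, cat_append, hr', cat_append]
  · obtain ⟨e, rfl, rfl⟩ := exists_eq_append_of_cat_eq hx' hle
    refine ⟨m ++ e, w', y', (cat_append m e y').symm, fun z => ?_, by simp; ring⟩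
    rw [Homeomorph.mul_apply, cat_append, hr, ← cat_append, hr']

lemma inv (h : HasLogSlope v x k) : HasLogSlope v⁻¹ (v x) (-k) := by
  obtain ⟨m, w, y, rfl, hr, rfl⟩ := h
  refine ⟨w, m, y, hr y, fun z => ?_, by ring⟩
  rw [Homeomorph.inv_apply, ← hr, Homeomorph.symm_apply_apply]

lemma inv_of_apply_eq (hfix : v x = x) (h : HasLogSlope v x k) : HasLogSlope v⁻¹ x (-k) := by
  simpa [hfix] using h.inv

lemma mul_of_apply_eq (hfix : u x = x) (hu : HasLogSlope u x k) (hv : HasLogSlope v x j) :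
    HasLogSlope (v * u) x (k + j) :=
  hu.mul (by rwa [hfix])

lemma zpow (hfix : v x = x) (h : HasLogSlope v x k) (n : ℤ) : HasLogSlope (v ^ n) x (n * k) := by
  induction n using Int.induction_on with
  | zero => simpa using one x
  | succ n ih =>
    rw [zpow_add_one, add_mul, one_mul, add_comm]
    exact h.mul_of_apply_eq hfix ih
  | pred n ih =>
    rw [zpow_sub_one, sub_mul, one_mul, sub_eq_neg_add]
    exact (h.inv_of_apply_eq hfix).mul_of_apply_eq (Homeomorph.inv_apply_eq_self hfix) ih

end HasLogSlope

lemma memV_iff_forall_hasLogSlope {v : Cantor ≃ₜ Cantor} :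
    memV v ↔ ∀ x, ∃ k, HasLogSlope v x k :=
  ⟨fun h x => let ⟨m, w, y, hx, hr⟩ := h x; ⟨_, m, w, y, hx, hr, rfl⟩,
    fun h x => let ⟨_, m, w, y, hx, hr, _⟩ := h x; ⟨m, w, y, hx, hr⟩⟩

lemma memV_mul {u v : Cantor ≃ₜ Cantor} (hu : memV u) (hv : memV v) : memV (v * u) := by
  rw [memV_iff_forall_hasLogSlope] at *
  intro x
  obtain ⟨k, hk⟩ := hu x
  obtain ⟨j, hj⟩ := hv (u x)
  exact ⟨_, hk.mul hj⟩

lemma conjH_eq_conj (φ v : Cantor ≃ₜ Cantor) : conjH φ v = MulAut.conj φ v := rfl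

lemma conjH_apply_apply (φ v : Cantor ≃ₜ Cantor) (x : Cantor) : conjH φ v (φ x) = φ (v x) := by
  simp [conjH]

section Germs

variable {φ v : Cantor ≃ₜ Cantor} {x : Cantor}

lemma eventually_apply_eq_self_of_hasLogSlope_zero (hfix : v x = x) (h : HasLogSlope v x 0) :
    ∀ᶠ z in 𝓝 x, v z = z := by
  obtain ⟨m, w, y, rfl, hr, hk⟩ := h
  have hw : w = m := by
    have := take_cat w y
    rwa [← hr, hfix, (by omega : w.length = m.length), take_cat, eq_comm] at this
  filter_upwards [cyl_mem_nhds ⟨y, rfl⟩] with z ⟨z', hz'⟩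
  rw [hz', hr, hw]

lemma hasLogSlope_zero_of_eventually_apply_eq_self (h : ∀ᶠ z in 𝓝 x, v z = z) :
    HasLogSlope v x 0 := by
  obtain ⟨n, -, hn⟩ := (nhds_hasBasis_cylinder x).mem_iff.1 h
  exact ⟨take n x, take n x, drop n x, (cat_take_drop n x).symm,
    fun z => hn (cat_take_mem_cylinder n x z), (sub_self _).symm⟩

lemma eventually_conjH_apply_eq_self (h : ∀ᶠ z in 𝓝 x, v z = z) :
    ∀ᶠ z in 𝓝 (φ x), conjH φ v z = z := by
  have hφ : Tendsto φ.symm (𝓝 (φ x)) (𝓝 x) := by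
    simpa using φ.symm.continuous.tendsto (φ x)
  filter_upwards [hφ.eventually h] with z hz
  simp [conjH, hz]

end Germs

lemma eq_mul_of_hasLogSlope_conjH (ψ : Cantor ≃ₜ Cantor) {W G : Cantor ≃ₜ Cantor} {ξ : Cantor}
    {d g s t : ℤ} (hWξ : W ξ = ξ) (hGξ : G ξ = ξ)
    (hW : HasLogSlope W ξ (d * g)) (hG : HasLogSlope G ξ g)
    (hsW : HasLogSlope (conjH ψ W) (ψ ξ) s) (hsG : HasLogSlope (conjH ψ G) (ψ ξ) t) :
    s = d * t := by
  -- `(G ^ d)⁻¹ * W` has slope `0` at `ξ`, so it is the identity near `ξ`; so is its conjugate.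
  have hU : HasLogSlope ((G ^ d)⁻¹ * W) ξ 0 := by
    simpa using hW.mul_of_apply_eq hWξ
      ((hG.zpow hGξ d).inv_of_apply_eq (Homeomorph.zpow_apply_eq_self hGξ d))
  have hUξ : ((G ^ d)⁻¹ * W) ξ = ξ := by
    simp [hWξ, Homeomorph.symm_apply_eq, Homeomorph.zpow_apply_eq_self hGξ]
  have hcU : HasLogSlope (conjH ψ ((G ^ d)⁻¹ * W)) (ψ ξ) (s + -(d * t)) := by
    have hGξ' := (conjH_apply_apply ψ G ξ).trans (congrArg ψ hGξ)
    have hWξ' := (conjH_apply_apply ψ W ξ).trans (congrArg ψ hWξ)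
    rw [conjH_eq_conj, map_mul, map_inv, map_zpow, ← conjH_eq_conj, ← conjH_eq_conj]
    exact hsW.mul_of_apply_eq hWξ'
      ((hsG.zpow hGξ' d).inv_of_apply_eq (Homeomorph.zpow_apply_eq_self hGξ' d))
  have := hcU.unique (hasLogSlope_zero_of_eventually_apply_eq_self
    (eventually_conjH_apply_eq_self (eventually_apply_eq_self_of_hasLogSlope_zero hUξ hU)))
  linarith

section TailClass

variable {c s w y : List Bool}

lemma cat_tailSeq (hc : c ≠ []) : cat c (tailSeq c) = tailSeq c := by
  have hc0 := List.length_pos_iff.2 hc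
  funext n
  by_cases h : n < c.length
  · simp [cat, tailSeq, h, Nat.mod_eq_of_lt h]
  · simp only [cat, tailSeq, h, if_false]
    rw [← Nat.mod_eq_sub_mod (not_lt.1 h)]

lemma eq_tailSeq_of_cat_eq_self {t : Cantor} (hs : s ≠ []) (h : cat s t = t) : t = tailSeq s := by
  funext n
  have := iterate_cat_mem_cylinder hs (n + 1) t (tailSeq s)
  rw [iterate_fixed h, iterate_fixed (cat_tailSeq hs)] at this
  exact this n (lt_add_one n)

lemma isPeriodicPt_tailSeq (c : List Bool) : IsPeriodicPt shift c.length (tailSeq c) := by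
  rcases eq_or_ne c [] with rfl | hc
  · exact isPeriodicPt_zero _ _
  · rw [isPeriodicPt_shift_iff]
    conv_lhs => rw [← cat_tailSeq hc]
    exact drop_cat c _

lemma take_length_tailSeq (c : List Bool) : take c.length (tailSeq c) = c := by
  rcases eq_or_ne c [] with rfl | hc
  · rfl
  · conv_lhs => rw [← cat_tailSeq hc]
    exact take_cat c _

lemma take_mul_length_tailSeq (d : List Bool) (K : ℕ) :
    take (K * d.length) (tailSeq d) = (List.replicate K d).flatten := by
  rcases eq_or_ne d [] with rfl | hd
  · simp only [List.length_nil, mul_zero, List.flatten_replicate_nil]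
    rfl
  induction K with
  | zero => simp only [zero_mul, List.replicate_zero, List.flatten_nil]; rfl
  | succ K ih =>
    conv_lhs => rw [← cat_tailSeq hd]
    rw [take_cat_of_le (by nlinarith), List.replicate_succ, List.flatten_cons, ← ih]
    congr 2
    rw [Nat.succ_mul]
    omega

lemma PrimeWord.minimalPeriod_tailSeq (hc : PrimeWord c) :
    minimalPeriod shift (tailSeq c) = c.length := by
  set g := minimalPeriod shift (tailSeq c)
  have hc0 : 0 < c.length := List.length_pos_iff.2 hc.1
  have hg0 : 0 < g := (isPeriodicPt_tailSeq c).minimalPeriod_pos hc0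
  obtain ⟨K, hK⟩ : g ∣ c.length := (isPeriodicPt_tailSeq c).minimalPeriod_dvd
  set d := take g (tailSeq c)
  have hd : tailSeq c = tailSeq d := by
    refine eq_tailSeq_of_cat_eq_self (List.ne_nil_of_length_pos (by simpa [d] using hg0)) ?_
    conv_lhs => rw [← isPeriodicPt_shift_iff.1 (isPeriodicPt_minimalPeriod shift (tailSeq c))]
    exact cat_take_drop g _
  have hcd : c = (List.replicate K d).flatten := by
    rw [← take_mul_length_tailSeq, ← hd, length_take, mul_comm, ← hK, take_length_tailSeq]
  by_contra hne
  have hK2 : 2 ≤ K := by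
    rcases K with _ | _ | K
    · omega
    · exact absurd (by simpa using hK.symm) hne
    · omega
  exact hc.2 d K hK2 hcd

lemma PrimeWord.length_dvd_of_cat_tailSeq_eq (hc : PrimeWord c)
    (h : cat y (tailSeq c) = cat w (tailSeq s)) : c.length ∣ s.length := by
  have hdrop : shift^[w.length] (tailSeq c) = shift^[y.length] (tailSeq s) := by
    have := congrArg (drop (y.length + w.length)) h
    rwa [← drop_drop, drop_cat, add_comm, ← drop_drop, drop_cat, ← iterate_shift,
      ← iterate_shift] at this
  have hmem : tailSeq c ∈ periodicPts shift :=
    mk_mem_periodicPts (List.length_pos_iff.2 hc.1) (isPeriodicPt_tailSeq c)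
  rw [← hc.minimalPeriod_tailSeq, ← minimalPeriod_apply_iterate hmem w.length, hdrop]
  exact ((isPeriodicPt_tailSeq s).apply_iterate y.length).minimalPeriod_dvd

end TailClass

section FixedPoints

variable {v : Cantor ≃ₜ Cantor} {x : Cantor} {k : ℤ}

lemma exists_contracting_rule (hfix : v x = x) (h : HasLogSlope v x k) (hk : k < 0) :
    ∃ m s, s ≠ [] ∧ (s.length : ℤ) = -k ∧ x = cat m (tailSeq s) ∧
      ∀ z, v (cat m z) = cat m (cat s z) := by
  obtain ⟨m, w, y, rfl, hr, rfl⟩ := h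
  obtain ⟨s, rfl, hy⟩ := exists_eq_append_of_cat_eq (hfix.symm.trans (hr y)) (by omega)
  have hs : s ≠ [] := by rintro rfl; simp at hk
  refine ⟨m, s, hs, by simp, by rw [← eq_tailSeq_of_cat_eq_self hs hy.symm], fun z => ?_⟩
  rw [hr, cat_append]

lemma PrimeWord.length_dvd_of_hasLogSlope {c : List Bool} (hc : PrimeWord c)
    (hx : InTailClass x c) (hfix : v x = x) (h : HasLogSlope v x k) : (c.length : ℤ) ∣ k := by
  have key : ∀ {u : Cantor ≃ₜ Cantor} {j : ℤ}, u x = x → HasLogSlope u x j → j < 0 →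
      (c.length : ℤ) ∣ j := by
    intro u j hux hj hneg
    obtain ⟨m, s, -, hs, hxm, -⟩ := exists_contracting_rule hux hj hneg
    obtain ⟨y, hy⟩ := hx
    have := Int.natCast_dvd_natCast.2 (hc.length_dvd_of_cat_tailSeq_eq (hy.symm.trans hxm))
    rwa [hs, dvd_neg] at this
  rcases lt_trichotomy k 0 with hk | rfl | hk
  · exact key hfix h hk
  · exact dvd_zero _
  · exact dvd_neg.1 (key (Homeomorph.inv_apply_eq_self hfix) (h.inv_of_apply_eq hfix)
      (neg_neg_of_pos hk))

def IsAttracting (v : Cantor ≃ₜ Cantor) (x : Cantor) : Prop :=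
  ∀ᶠ y in 𝓝 x, Tendsto (fun n => v^[n] y) atTop (𝓝 x)

lemma IsAttracting.conj (h : IsAttracting v x) (φ : Cantor ≃ₜ Cantor) :
    IsAttracting (conjH φ v) (φ x) := by
  have hφ : Tendsto φ.symm (𝓝 (φ x)) (𝓝 x) := by
    simpa using φ.symm.continuous.tendsto (φ x)
  filter_upwards [hφ.eventually h] with y hy
  have hsemi : Semiconj φ v (conjH φ v) := fun z => (conjH_apply_apply φ v z).symm
  refine ((φ.continuous.tendsto x).comp hy).congr fun n => ?_
  rw [comp_apply, hsemi.iterate_right n, φ.apply_symm_apply]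

lemma iterate_mem_cylinder_of_contracting {m s : List Bool} (hs : s ≠ [])
    (hv : ∀ z, v (cat m z) = cat m (cat s z)) (n : ℕ) (z : Cantor) :
    v^[n] (cat m z) ∈ cylinder (cat m (tailSeq s)) n := by
  have hsemi : Semiconj (cat m) (cat s) v := fun z => (hv z).symm
  rw [← hsemi.iterate_right n z, ← iterate_fixed (cat_tailSeq hs) n]
  exact cylinder_anti _ (Nat.le_add_left _ _)
    (cat_mem_cylinder_cat m (iterate_cat_mem_cylinder hs n z (tailSeq s)))

lemma isAttracting_of_hasLogSlope_neg (hfix : v x = x) (h : HasLogSlope v x k) (hk : k < 0) :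
    IsAttracting v x := by
  obtain ⟨m, s, hs, -, rfl, hv⟩ := exists_contracting_rule hfix h hk
  filter_upwards [cyl_mem_nhds ⟨_, rfl⟩] with y ⟨z, hz⟩
  subst hz
  refine (nhds_hasBasis_cylinder _).tendsto_right_iff.2 fun n _ => ?_
  filter_upwards [eventually_ge_atTop n] with j hj
  exact cylinder_anti _ hj (iterate_mem_cylinder_of_contracting hs hv j z)

lemma not_isAttracting_of_hasLogSlope_pos (hfix : v x = x) (h : HasLogSlope v x k) (hk : 0 < k) :
    ¬ IsAttracting v x := by
  -- `v⁻¹` contracts the cylinder of `m` towards `x`, so a point whose `v`-orbit enters it at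
  -- time `j` agrees with `x` on its first `j` letters.
  intro hattr
  obtain ⟨m, s, hs, -, rfl, hv⟩ := exists_contracting_rule
    (Homeomorph.inv_apply_eq_self hfix) (h.inv_of_apply_eq hfix) (neg_neg_of_pos hk)
  set x := cat m (tailSeq s)
  obtain ⟨n, -, hn⟩ := (nhds_hasBasis_cylinder x).mem_iff.1 hattr
  set y := update x n (!x n)
  obtain ⟨j, ⟨z, hz⟩, hnj⟩ := (((hn (update_mem_cylinder x n _)).eventually
    (cyl_mem_nhds (w := m) ⟨_, rfl⟩)).and (eventually_gt_atTop n)).exists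
  have hy : y ∈ cylinder x j := by
    rw [← (LeftInverse.iterate v.symm_apply_apply j) y, hz]
    exact iterate_mem_cylinder_of_contracting hs hv j z
  simpa [y] using hy n hnj

end FixedPoints

def IsPrefixReplacement (f : Cantor → Cantor) : Prop :=
  ∀ x, ∃ (m w : List Bool) (y : Cantor), x = cat m y ∧ ∀ z, f (cat m z) = cat w z

lemma IsPrefixReplacement.continuous {f : Cantor → Cantor} (hf : IsPrefixReplacement f) :
    Continuous f := by
  refine continuous_iff_continuousAt.2 fun x => ?_
  obtain ⟨m, w, y, rfl, hr⟩ := hf x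
  have hf : (fun z => cat w (drop m.length z)) =ᶠ[𝓝 (cat m y)] f := by
    filter_upwards [cyl_mem_nhds ⟨y, rfl⟩] with z ⟨z', hz⟩
    rw [hz, hr, drop_cat]
  exact ((continuous_cat w).comp (continuous_drop _)).continuousAt.congr hf

lemma mem_cyl_congr {w : List Bool} {x z : Cantor} {n : ℕ} (h : z ∈ cylinder x n)
    (hw : w.length ≤ n) : z ∈ cyl w ↔ x ∈ cyl w := by
  rw [mem_cyl_iff_take, mem_cyl_iff_take, take_eq_of_mem_cylinder (cylinder_anti _ hw h)]

lemma disjoint_cyl_cons_not (b : Bool) (l l' : List Bool) :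
    Disjoint (cyl (b :: l)) (cyl ((!b) :: l')) :=
  Set.disjoint_left.2 fun _ ⟨_, hy⟩ ⟨_, hy'⟩ => by simpa [cat] using congrFun (hy.symm.trans hy') 0

section CylSwap

variable {a b : List Bool}

open Classical in
noncomputable def cylSwap (a b : List Bool) (z : Cantor) : Cantor :=
  if z ∈ cyl a then cat b (drop a.length z) else if z ∈ cyl b then cat a (drop b.length z) else z

lemma cylSwap_cat_left (z : Cantor) : cylSwap a b (cat a z) = cat b z := by
  rw [cylSwap, if_pos ⟨z, rfl⟩, drop_cat]

lemma cylSwap_cat_right (hab : Disjoint (cyl a) (cyl b)) (z : Cantor) :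
    cylSwap a b (cat b z) = cat a z := by
  rw [cylSwap, if_neg (Set.disjoint_right.1 hab ⟨z, rfl⟩), if_pos ⟨z, rfl⟩, drop_cat]

lemma cylSwap_of_notMem {z : Cantor} (ha : z ∉ cyl a) (hb : z ∉ cyl b) : cylSwap a b z = z := by
  rw [cylSwap, if_neg ha, if_neg hb]

lemma cylSwap_involutive (hab : Disjoint (cyl a) (cyl b)) : Involutive (cylSwap a b) := by
  intro z
  by_cases ha : z ∈ cyl a
  · obtain ⟨y, rfl⟩ := ha
    rw [cylSwap_cat_left, cylSwap_cat_right hab]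
  by_cases hb : z ∈ cyl b
  · obtain ⟨y, rfl⟩ := hb
    rw [cylSwap_cat_right hab, cylSwap_cat_left]
  rw [cylSwap_of_notMem ha hb, cylSwap_of_notMem ha hb]

lemma isPrefixReplacement_cylSwap (hab : Disjoint (cyl a) (cyl b)) :
    IsPrefixReplacement (cylSwap a b) := by
  intro x
  by_cases ha : x ∈ cyl a
  · obtain ⟨y, rfl⟩ := ha
    exact ⟨a, b, y, rfl, cylSwap_cat_left⟩
  by_cases hb : x ∈ cyl b
  · obtain ⟨y, rfl⟩ := hb
    exact ⟨b, a, y, rfl, cylSwap_cat_right hab⟩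
  set n := max a.length b.length
  refine ⟨take n x, take n x, drop n x, (cat_take_drop n x).symm, fun z => cylSwap_of_notMem ?_ ?_⟩
  · exact (mem_cyl_congr (cat_take_mem_cylinder n x z) (le_max_left _ _)).not.2 ha
  · exact (mem_cyl_congr (cat_take_mem_cylinder n x z) (le_max_right _ _)).not.2 hb

noncomputable def cylSwapHomeomorph (hab : Disjoint (cyl a) (cyl b)) : Cantor ≃ₜ Cantor where
  toEquiv := Involutive.toPerm _ (cylSwap_involutive hab)
  continuous_toFun := (isPrefixReplacement_cylSwap hab).continuous
  continuous_invFun := (isPrefixReplacement_cylSwap hab).continuous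

lemma memV_cylSwapHomeomorph (hab : Disjoint (cyl a) (cyl b)) : memV (cylSwapHomeomorph hab) :=
  isPrefixReplacement_cylSwap hab

end CylSwap

lemma exists_memV_cat_append_eq (u c : List Bool) (hu : u ≠ []) :
    ∃ σ, memV σ ∧ ∀ z, σ (cat (u ++ c) z) = cat u z := by
  obtain ⟨b, u', rfl⟩ := List.exists_cons_of_ne_nil hu
  -- `u·c·z ↦ (!b)·z ↦ u·z`
  have h₁ := disjoint_cyl_cons_not b (u' ++ c) []
  have h₂ := disjoint_cyl_cons_not b u' []
  refine ⟨cylSwapHomeomorph h₂ * cylSwapHomeomorph h₁,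
    memV_mul (memV_cylSwapHomeomorph h₁) (memV_cylSwapHomeomorph h₂), fun z => ?_⟩
  exact (congrArg (cylSwap _ _) (cylSwap_cat_left z)).trans (cylSwap_cat_right h₂ z)

lemma exists_generator {c : List Bool} {x : Cantor} (hc : c ≠ []) (hx : InTailClass x c) :
    ∃ σ, memV σ ∧ σ x = x ∧ HasLogSlope σ x c.length := by
  obtain ⟨y, rfl⟩ := hx
  obtain ⟨σ, hσ, hr⟩ := exists_memV_cat_append_eq (y ++ c) c (by simp [hc])
  have hx : cat y (tailSeq c) = cat (y ++ c ++ c) (tailSeq c) := by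
    rw [cat_append, cat_append, cat_tailSeq hc, cat_tailSeq hc]
  refine ⟨σ, hσ, ?_, y ++ c ++ c, y ++ c, tailSeq c, hx, hr, by simp⟩
  conv_lhs => rw [hx]
  rw [hr, cat_append, cat_tailSeq hc]

lemma conjH_inv_conjH (φ v : Cantor ≃ₜ Cantor) : conjH φ⁻¹ (conjH φ v) = v := by
  simp only [conjH_eq_conj, MulAut.conj_apply]
  group

namespace NormalizesV

variable {φ v : Cantor ≃ₜ Cantor}

lemma memV_conjH (hφ : NormalizesV φ) (hv : memV v) : memV (conjH φ v) :=
  hφ.subset ⟨v, hv, rfl⟩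

lemma memV_conjH_inv (hφ : NormalizesV φ) (hv : memV v) : memV (conjH φ⁻¹ v) := by
  obtain ⟨w, hw, rfl⟩ := hφ.symm.subset hv
  rwa [conjH_inv_conjH]

lemma eq_length_of_hasLogSlope_conjH {σ : Cantor ≃ₜ Cantor} {x : Cantor} {c c' : List Bool} {q : ℤ}
    (hφ : NormalizesV φ) (hc : PrimeWord c) (hx : InTailClass x c) (hc' : PrimeWord c')
    (hφx : InTailClass (φ x) c') (hσx : σ x = x) (hσ : HasLogSlope σ x c.length)
    (hq : HasLogSlope (conjH φ σ) (φ x) q) : q = c'.length := by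
  have hφx' : φ⁻¹ (φ x) = x := φ.symm_apply_apply x
  have hτx : conjH φ σ (φ x) = φ x := (conjH_apply_apply φ σ x).trans (congrArg φ hσx)
  obtain ⟨b, hb⟩ := hc'.length_dvd_of_hasLogSlope hφx hτx hq
  obtain ⟨σ', hσ'V, hσ'x, hσ'⟩ := exists_generator hc'.1 hφx
  have hρx : conjH φ⁻¹ σ' x = x := by
    simpa [hσ'x, hφx'] using conjH_apply_apply φ⁻¹ σ' (φ x)
  obtain ⟨r, hr⟩ := memV_iff_forall_hasLogSlope.1 (hφ.memV_conjH_inv hσ'V) x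
  obtain ⟨e, rfl⟩ := hc.length_dvd_of_hasLogSlope hx hρx hr
  have hback : (c.length : ℤ) = b * (c.length * e) :=
    eq_mul_of_hasLogSlope_conjH φ⁻¹ hτx hσ'x (by rwa [mul_comm, ← hb]) hσ'
      (by rwa [conjH_inv_conjH, hφx']) (by rwa [hφx'])
  have hc0 : (0 : ℤ) < c.length := by exact_mod_cast List.length_pos_iff.2 hc.1
  -- `b` is a unit; `b = -1` would make `φσφ⁻¹` attracting at `φ x`, hence `σ` attracting at `x`.
  have hbe : b * e = 1 := mul_left_cancel₀ hc0.ne' (by linear_combination -hback)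
  rcases Int.eq_one_or_neg_one_of_mul_eq_one hbe with rfl | rfl
  · simpa using hb
  · have hc'0 : (0 : ℤ) < c'.length := by exact_mod_cast List.length_pos_iff.2 hc'.1
    have hattr := (isAttracting_of_hasLogSlope_neg hτx hq (by linarith)).conj φ⁻¹
    rw [conjH_inv_conjH, hφx'] at hattr
    exact absurd hattr (not_isAttracting_of_hasLogSlope_pos hσx hσ hc0)

end NormalizesV

theorem slope_ratio_invariant_general (φ : Cantor ≃ₜ Cantor) (hφ : NormalizesV φ)
    (x : Cantor) (mx mφx : List Bool)
    (hmx : PrimeWord mx) (hx : InTailClass x mx)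
    (hmφx : PrimeWord mφx) (hφx : InTailClass (φ x) mφx)
    (v : Cantor ≃ₜ Cantor) (hfix : v x = x)
    (k k' : ℤ) (hk : HasLogSlope v x k)
    (hk' : HasLogSlope (conjH φ v) (φ x) k') :
    k' * (mx.length : ℤ) = k * (mφx.length : ℤ) ∧ (mx.length : ℤ) ∣ k := by
  obtain ⟨σ, hσV, hσx, hσ⟩ := exists_generator hmx.1 hx
  obtain ⟨q, hq⟩ := memV_iff_forall_hasLogSlope.1 (hφ.memV_conjH hσV) (φ x)
  have hq' : q = mφx.length := hφ.eq_length_of_hasLogSlope_conjH hmx hx hmφx hφx hσx hσ hq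
  obtain ⟨a, rfl⟩ := hmx.length_dvd_of_hasLogSlope hx hfix hk
  have hk'q : k' = a * q := eq_mul_of_hasLogSlope_conjH φ hfix hσx (by rwa [mul_comm]) hσ hk' hq
  exact ⟨by rw [hk'q, hq']; ring, dvd_mul_right _ _⟩

/-- For a rational point `x` in the tail class of a prime word `m_x`,
a normalizing homeomorphism `φ` with `φ x` in the tail class of a prime word `m_{φx}`,
and `v ∈ V` fixing `x` with nontrivial slope, one has
`log₂((φvφ⁻¹)'(φx)) / |m_{φx}| = log₂(v'(x)) / |m_x|` and `|m_x|` divides `log₂(v'(x))`. -/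
theorem slope_ratio_invariant (φ : Cantor ≃ₜ Cantor) (hφ : NormalizesV φ)
    (x : Cantor) (mx mφx : List Bool)
    (hmx : PrimeWord mx) (hx : InTailClass x mx)
    (hmφx : PrimeWord mφx) (hφx : InTailClass (φ x) mφx)
    (v : Cantor ≃ₜ Cantor) (hv : memV v) (hfix : v x = x)
    (k k' : ℤ) (hk : HasLogSlope v x k) (hk0 : k ≠ 0)
    (hk' : HasLogSlope (conjH φ v) (φ x) k') :
    k' * (mx.length : ℤ) = k * (mφx.length : ℤ) ∧ (mx.length : ℤ) ∣ k :=
  slope_ratio_invariant_general φ hφ x mx mφx hmx hx hmφx hφx v hfix k k' hk hk'
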